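/- With ψ₁, ψ₂ the constrained minimizers from the regulator representation (ψ₁ minimizes Σ_Y(∂_m φ)² − κΣ_X(∂φ)² and ψ₂ minimizes Σ_Y(∂_m φ)² with φ fixed on Y^c), the regulator satisfies the two-sided bound exp((κ/2)Σ_X(∂ψ₂)²) ≤ G(X,Y) ≤ exp((κ/2)Σ_X(∂ψ₁)²). -/

import Mathlib

open Finset

abbrev Pt (d : ℕ) := Fin d → ℤ

def unitVec {d : ℕ} (i : Fin d) : Pt d := fun j => if j = i then 1 else 0

def dirs (d : ℕ) : Finset (Pt d) :=
  (Finset.univ : Finset (Fin d)).biUnion fun i => {unitVec i, -unitVec i}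

/-- `Σ_X (∂φ)² := ½ Σ_{x∈X} Σ_e (∂_e φ(x))²`. -/
noncomputable def dsq {d : ℕ} (X : Finset (Pt d)) (φ : Pt d → ℝ) : ℝ :=
  (1 / 2) * ∑ x ∈ X, ∑ v ∈ dirs d, (φ (x + v) - φ x) ^ 2

/-- `Σ_Y (∂_m φ)² := Σ_Y (∂φ)² + m² Σ_Y φ²`. -/
noncomputable def dsqm {d : ℕ} (m : ℝ) (Y : Finset (Pt d)) (φ : Pt d → ℝ) : ℝ :=
  dsq Y φ + m ^ 2 * ∑ x ∈ Y, (φ x) ^ 2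

theorem stmt15_general {d : ℕ} (X Y : Finset (Pt d))
    (m κ : ℝ)
    (φ₀ ψ₁ ψ₂ : Pt d → ℝ)
    (hb₁ : ∀ x, x ∉ Y → ψ₁ x = φ₀ x)
    (hb₂ : ∀ x, x ∉ Y → ψ₂ x = φ₀ x)
    (hmin₁ : ∀ χ : Pt d → ℝ, (∀ x, x ∉ Y → χ x = φ₀ x) →
      dsqm m Y ψ₁ - κ * dsq X ψ₁ ≤ dsqm m Y χ - κ * dsq X χ)
    (hmin₂ : ∀ χ : Pt d → ℝ, (∀ x, x ∉ Y → χ x = φ₀ x) →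
      dsqm m Y ψ₂ ≤ dsqm m Y χ) :
    Real.exp (κ / 2 * dsq X ψ₂)
        ≤ Real.exp (κ / 2 * dsq X ψ₁ - (1 / 2) * dsqm m Y ψ₁ + (1 / 2) * dsqm m Y ψ₂) ∧
      Real.exp (κ / 2 * dsq X ψ₁ - (1 / 2) * dsqm m Y ψ₁ + (1 / 2) * dsqm m Y ψ₂)
        ≤ Real.exp (κ / 2 * dsq X ψ₁) := by
  have hψ₁_min : dsqm m Y ψ₁ - κ * dsq X ψ₁ ≤ dsqm m Y ψ₂ - κ * dsq X ψ₂ := hmin₁ ψ₂ hb₂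
  have hψ₂_min : dsqm m Y ψ₂ ≤ dsqm m Y ψ₁ := hmin₂ ψ₁ hb₁
  exact ⟨Real.exp_le_exp.2 (by linarith), Real.exp_le_exp.2 (by linarith)⟩

/-- with `ψ₁` the constrained minimizer of `Σ_Y(∂_mφ)² − κΣ_X(∂φ)²` and `ψ₂`
the constrained minimizer of `Σ_Y(∂_mφ)²` (both with `φ` fixed equal to `φ₀` on `Y^c`),
the regulator `G(X,Y) = exp((κ/2)Σ_X(∂ψ₁)² − ½Σ_Y(∂_mψ₁)² + ½Σ_Y(∂_mψ₂)²)` satisfies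
`exp((κ/2)Σ_X(∂ψ₂)²) ≤ G(X,Y) ≤ exp((κ/2)Σ_X(∂ψ₁)²)`. -/
theorem stmt15 {d : ℕ} (X Y : Finset (Pt d)) (hXY : X ⊆ Y)
    (m κ : ℝ) (hκ : 0 < κ)
    (φ₀ ψ₁ ψ₂ : Pt d → ℝ)
    (hb₁ : ∀ x, x ∉ Y → ψ₁ x = φ₀ x)
    (hb₂ : ∀ x, x ∉ Y → ψ₂ x = φ₀ x)
    (hmin₁ : ∀ χ : Pt d → ℝ, (∀ x, x ∉ Y → χ x = φ₀ x) →
      dsqm m Y ψ₁ - κ * dsq X ψ₁ ≤ dsqm m Y χ - κ * dsq X χ)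
    (hmin₂ : ∀ χ : Pt d → ℝ, (∀ x, x ∉ Y → χ x = φ₀ x) →
      dsqm m Y ψ₂ ≤ dsqm m Y χ) :
    Real.exp (κ / 2 * dsq X ψ₂)
        ≤ Real.exp (κ / 2 * dsq X ψ₁ - (1 / 2) * dsqm m Y ψ₁ + (1 / 2) * dsqm m Y ψ₂) ∧
      Real.exp (κ / 2 * dsq X ψ₁ - (1 / 2) * dsqm m Y ψ₁ + (1 / 2) * dsqm m Y ψ₂)
        ≤ Real.exp (κ / 2 * dsq X ψ₁) :=
  stmt15_general X Y m κ φ₀ ψ₁ ψ₂ hb₁ hb₂ hmin₁ hmin₂
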